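/- Let φ ∈ L²(𝕋^d) with Fourier coefficients c_k(φ), and f = Σ_{y ∈ P(M)} a_y T_y φ where T_y φ(x) = φ(x - 2πy). Then for all h ∈ G(M^T) and z ∈ ℤ^d, c_{h + M^T z}(f) = â_h · c_{h + M^T z}(φ), where â_h = Σ_{y ∈ P(M)} a_y e^{-2πi h^T y}. -/

import Mathlib

open Matrix Real MeasureTheory

/-- `x` belongs to the lattice `Λ(M) = M⁻¹ ℤ^d`. -/
def inLattice {d : ℕ} (M : Matrix (Fin d) (Fin d) ℤ) (x : Fin d → ℝ) : Prop :=
  ∃ z : Fin d → ℤ, (M.map (Int.cast : ℤ → ℝ)).mulVec x = fun i => (z i : ℝ)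

/-- `P` is a pattern for `M`: a complete set of representatives of `M⁻¹ℤ^d mod ℤ^d`. -/
def IsPattern {d : ℕ} (M : Matrix (Fin d) (Fin d) ℤ) (P : Set (Fin d → ℝ)) : Prop :=
  (∀ y ∈ P, inLattice M y) ∧
  ∀ x, inLattice M x → ∃! y, y ∈ P ∧ ∃ z : Fin d → ℤ, x - y = fun i => (z i : ℝ)

/-- `G` is a complete set of representatives of `ℤ^d` modulo the subgroup `A ℤ^d`. -/
def IsRepMod {d : ℕ} (A : Matrix (Fin d) (Fin d) ℤ) (G : Set (Fin d → ℤ)) : Prop :=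
  ∀ k : Fin d → ℤ, ∃! h, h ∈ G ∧ ∃ z : Fin d → ℤ, k = h + A.mulVec z

/-- The character value `e^{-2πi kᵀ y}`. -/
noncomputable def ec {d : ℕ} (k : Fin d → ℤ) (y : Fin d → ℝ) : ℂ :=
  Complex.exp (-(2 * π * Complex.I) * ∑ i, (k i : ℂ) * (y i : ℂ))

/-- A fundamental domain `[0,2π)^d` for the torus `𝕋^d`. -/
def torusBox (d : ℕ) : Set (Fin d → ℝ) := Set.univ.pi fun _ => Set.Ico 0 (2 * π)

/-- `f` is `2π`-periodic in every coordinate direction. -/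
def TorusPeriodic {d : ℕ} (f : (Fin d → ℝ) → ℂ) : Prop :=
  ∀ (x : Fin d → ℝ) (z : Fin d → ℤ), f (x + fun i => 2 * π * (z i : ℝ)) = f x

/-- The `k`-th Fourier coefficient `c_k(f) = (2π)^{-d} ∫_{𝕋^d} f(x) e^{-i kᵀ x} dx`. -/
noncomputable def fc {d : ℕ} (f : (Fin d → ℝ) → ℂ) (k : Fin d → ℤ) : ℂ :=
  ((1 / (2 * π) ^ d : ℝ) : ℂ) *
    ∫ x in torusBox d, f x * Complex.exp (-Complex.I * ∑ i, (k i : ℂ) * (x i : ℂ))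

/-- The normalized `L²(𝕋^d)` inner product `⟨f,g⟩ = (2π)^{-d} ∫ f ḡ`. -/
noncomputable def ip {d : ℕ} (f g : (Fin d → ℝ) → ℂ) : ℂ :=
  ((1 / (2 * π) ^ d : ℝ) : ℂ) * ∫ x in torusBox d, f x * (starRingEnd ℂ) (g x)

/-- The translation operator `T_y f = f(· - 2πy)`. -/
noncomputable def Tr {d : ℕ} (y : Fin d → ℝ) (f : (Fin d → ℝ) → ℂ) : (Fin d → ℝ) → ℂ :=
  fun x => f (x - (2 * π) • y)

open Submodule Pointwise

/-!
The product of a `2π`-periodic `φ` with the character `e^{-i kᵀx}` is again periodic, and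
integrals of periodic functions over `[0,2π)^d`, a fundamental domain of `2πℤ^d`, are invariant
under translation. Hence `c_k(T_y φ) = e^{-i kᵀ 2πy} c_k(φ)`. For `y ∈ M⁻¹ℤ^d` and
`k = h + Mᵀz` this factor is `e^{-2πi hᵀy}`, because `(Mᵀz)ᵀ y = zᵀ (M y) ∈ ℤ`.
-/

section Character

variable {d : ℕ}

noncomputable def torusChar (k : Fin d → ℤ) (x : Fin d → ℝ) : ℂ :=
  Complex.exp (-Complex.I * ∑ i, (k i : ℂ) * (x i : ℂ))

theorem torusChar_eq_exp (k : Fin d → ℤ) (x : Fin d → ℝ) :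
    torusChar k x = Complex.exp (↑(-∑ i, (k i : ℝ) * x i) * Complex.I) := by
  rw [torusChar]; push_cast; ring_nf

theorem norm_torusChar (k : Fin d → ℤ) (x : Fin d → ℝ) : ‖torusChar k x‖ = 1 := by
  rw [torusChar_eq_exp, Complex.norm_exp_ofReal_mul_I]

theorem continuous_torusChar (k : Fin d → ℤ) : Continuous (torusChar k) := by
  unfold torusChar; fun_prop

theorem torusChar_add (k : Fin d → ℤ) (x y : Fin d → ℝ) :
    torusChar k (x + y) = torusChar k x * torusChar k y := by
  simp only [torusChar, ← Complex.exp_add, Pi.add_apply, Complex.ofReal_add, mul_add,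
    Finset.sum_add_distrib]

theorem torusChar_add_left (k l : Fin d → ℤ) (x : Fin d → ℝ) :
    torusChar (k + l) x = torusChar k x * torusChar l x := by
  simp only [torusChar, ← Complex.exp_add, Pi.add_apply, Int.cast_add, add_mul, mul_add,
    Finset.sum_add_distrib]

theorem torusChar_two_pi_intCast (k z : Fin d → ℤ) :
    torusChar k (fun i => 2 * π * (z i : ℝ)) = 1 := by
  rw [torusChar]
  convert Complex.exp_int_mul_two_pi_mul_I (-∑ i, k i * z i) using 2
  push_cast
  rw [Finset.mul_sum, neg_mul, Finset.sum_mul, ← Finset.sum_neg_distrib]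
  exact Finset.sum_congr rfl fun i _ => by ring

theorem torusChar_transpose_mulVec (M : Matrix (Fin d) (Fin d) ℤ) (z : Fin d → ℤ)
    (x : Fin d → ℝ) : torusChar (Mᵀ *ᵥ z) x = torusChar z (M.map (Int.cast : ℤ → ℝ) *ᵥ x) := by
  simp only [torusChar, mulVec, dotProduct, transpose_apply, map_apply, Int.cast_sum,
    Int.cast_mul, Complex.ofReal_sum, Complex.ofReal_mul, Complex.ofReal_intCast, Finset.sum_mul,
    Finset.mul_sum]
  rw [Finset.sum_comm]
  exact congrArg _ (Finset.sum_congr rfl fun _ _ => Finset.sum_congr rfl fun _ _ => by ring)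

theorem ec_eq_torusChar (k : Fin d → ℤ) (y : Fin d → ℝ) :
    ec k y = torusChar k ((2 * π) • y) := by
  simp only [ec, torusChar, Pi.smul_apply, smul_eq_mul, Complex.ofReal_mul, Finset.mul_sum]
  congr 1
  exact Finset.sum_congr rfl fun i _ => by push_cast; ring

theorem torusChar_two_pi_smul_of_inLattice {M : Matrix (Fin d) (Fin d) ℤ}
    {y : Fin d → ℝ} (hy : inLattice M y) (h z : Fin d → ℤ) :
    torusChar (h + Mᵀ *ᵥ z) ((2 * π) • y) = ec h y := by
  obtain ⟨n, hn⟩ := hy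
  rw [torusChar_add_left, torusChar_transpose_mulVec, mulVec_smul, hn, ec_eq_torusChar]
  exact (congrArg _ (torusChar_two_pi_intCast z n)).trans (mul_one _)

end Character

noncomputable def torusBasis (d : ℕ) : Module.Basis (Fin d) ℝ (Fin d → ℝ) :=
  (Pi.basisFun ℝ (Fin d)).unitsSMul fun _ => Units.mk0 (2 * π) two_pi_pos.ne'

theorem torusBasis_repr {d : ℕ} (x : Fin d → ℝ) (i : Fin d) :
    (torusBasis d).repr x i = (2 * π)⁻¹ * x i := by
  simp [torusBasis, Module.Basis.repr_unitsSMul, Units.smul_def]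

theorem fundamentalDomain_torusBasis (d : ℕ) :
    ZSpan.fundamentalDomain (torusBasis d) = torusBox d := by
  ext x
  simp only [ZSpan.mem_fundamentalDomain, torusBasis_repr, torusBox, Set.mem_pi, Set.mem_univ,
    Set.mem_Ico, forall_const]
  refine forall_congr' fun i => ?_
  rw [inv_mul_lt_iff₀ two_pi_pos, mul_one, mul_nonneg_iff_of_pos_left (inv_pos.mpr two_pi_pos)]

theorem mem_span_torusBasis {d : ℕ} {l : Fin d → ℝ}
    (hl : l ∈ span ℤ (Set.range (torusBasis d))) :
    ∃ z : Fin d → ℤ, l = fun i => 2 * π * (z i : ℝ) := by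
  rw [Module.Basis.mem_span_iff_repr_mem] at hl
  choose z hz using hl
  simp only [algebraMap_int_eq, eq_intCast] at hz
  refine ⟨z, funext fun i => ?_⟩
  rw [hz i, torusBasis_repr, mul_inv_cancel_left₀ two_pi_pos.ne']

abbrev torusLattice (d : ℕ) : AddSubgroup (Fin d → ℝ) :=
  (span ℤ (Set.range (torusBasis d))).toAddSubgroup

instance (d : ℕ) : Countable (torusLattice d) :=
  inferInstanceAs (Countable (span ℤ (Set.range (torusBasis d))))

theorem isAddFundamentalDomain_torusBox (d : ℕ) :
    IsAddFundamentalDomain (torusLattice d) (torusBox d) := by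
  rw [← fundamentalDomain_torusBasis]
  exact ZSpan.isAddFundamentalDomain' (torusBasis d) volume

theorem image_sub_torusBox {d : ℕ} (c : Fin d → ℝ) :
    (· - c) '' torusBox d = -c +ᵥ torusBox d := by
  simp_rw [sub_eq_neg_add]
  exact Set.image_vadd (a := -c)

namespace TorusPeriodic

variable {d : ℕ} {g : (Fin d → ℝ) → ℂ}

theorem vadd_torusLattice (hg : TorusPeriodic g) (l : torusLattice d) (x : Fin d → ℝ) :
    g (l +ᵥ x) = g x := by
  obtain ⟨z, hz⟩ := mem_span_torusBasis l.2
  rw [AddSubgroup.vadd_def, vadd_eq_add, hz, add_comm, hg]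

theorem mul_torusChar (hg : TorusPeriodic g) (k : Fin d → ℤ) :
    TorusPeriodic fun x => g x * torusChar k x := by
  intro x z
  simp only [hg x z, torusChar_add, torusChar_two_pi_intCast, mul_one]

theorem setIntegral_torusBox_sub (hg : TorusPeriodic g) (c : Fin d → ℝ) :
    ∫ x in torusBox d, g (x - c) = ∫ x in torusBox d, g x := by
  rw [← (measurePreserving_sub_right volume c).setIntegral_image_emb
    (MeasurableEquiv.subRight c).measurableEmbedding, image_sub_torusBox]
  exact ((isAddFundamentalDomain_torusBox d).vadd_of_comm (-c)).setIntegral_eq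
    (isAddFundamentalDomain_torusBox d) hg.vadd_torusLattice

theorem integrableOn_torusBox_sub (hg : TorusPeriodic g) (hint : IntegrableOn g (torusBox d))
    (c : Fin d → ℝ) : IntegrableOn (fun x => g (x - c)) (torusBox d) := by
  refine ((measurePreserving_sub_right volume c).integrableOn_image
    (MeasurableEquiv.subRight c).measurableEmbedding).mp ?_
  rw [image_sub_torusBox]
  exact ((isAddFundamentalDomain_torusBox d).integrableOn_iff
    ((isAddFundamentalDomain_torusBox d).vadd_of_comm (-c)) hg.vadd_torusLattice).mp hint

end TorusPeriodic

section FourierCoefficients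

variable {d : ℕ}

theorem fc_eq_setIntegral_torusChar (f : (Fin d → ℝ) → ℂ) (k : Fin d → ℤ) :
    fc f k = ((1 / (2 * π) ^ d : ℝ) : ℂ) * ∫ x in torusBox d, f x * torusChar k x :=
  rfl

theorem MeasureTheory.IntegrableOn.mul_torusChar {f : (Fin d → ℝ) → ℂ}
    (hf : IntegrableOn f (torusBox d)) (k : Fin d → ℤ) :
    IntegrableOn (fun x => f x * torusChar k x) (torusBox d) :=
  hf.mul_bdd (continuous_torusChar k).aestronglyMeasurable.restrict
    (.of_forall fun x => (norm_torusChar k x).le)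

theorem fc_const_mul (c : ℂ) (f : (Fin d → ℝ) → ℂ) (k : Fin d → ℤ) :
    fc (fun x => c * f x) k = c * fc f k := by
  simp only [fc_eq_setIntegral_torusChar, mul_assoc, integral_const_mul]
  ring

theorem fc_finset_sum {ι : Type*} (s : Finset ι) (f : ι → (Fin d → ℝ) → ℂ)
    (hf : ∀ i ∈ s, IntegrableOn (f i) (torusBox d)) (k : Fin d → ℤ) :
    fc (fun x => ∑ i ∈ s, f i x) k = ∑ i ∈ s, fc (f i) k := by
  simp only [fc_eq_setIntegral_torusChar, Finset.sum_mul, ← Finset.mul_sum]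
  rw [integral_finsetSum s fun i hi => (hf i hi).mul_torusChar k]

theorem TorusPeriodic.fc_Tr {φ : (Fin d → ℝ) → ℂ} (hφ : TorusPeriodic φ)
    (y : Fin d → ℝ) (k : Fin d → ℤ) :
    fc (Tr y φ) k = torusChar k ((2 * π) • y) * fc φ k := by
  have hsplit : ∀ x, Tr y φ x * torusChar k x =
      torusChar k ((2 * π) • y) * (φ (x - (2 * π) • y) * torusChar k (x - (2 * π) • y)) := by
    intro x
    rw [Tr, ← sub_add_cancel x ((2 * π) • y), torusChar_add, add_sub_cancel_right]
    ring
  simp only [fc_eq_setIntegral_torusChar, hsplit, integral_const_mul,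
    (hφ.mul_torusChar k).setIntegral_torusBox_sub]
  ring

end FourierCoefficients

theorem fourierCoeff_of_translate_combination_general (d : ℕ) (M : Matrix (Fin d) (Fin d) ℤ)
    (P : Finset (Fin d → ℝ)) (hP : IsPattern M ↑P)
    (G : Set (Fin d → ℤ))
    (φ : (Fin d → ℝ) → ℂ) (hper : TorusPeriodic φ)
    (hint : IntegrableOn φ (torusBox d))
    (a : (Fin d → ℝ) → ℂ) (f : (Fin d → ℝ) → ℂ)
    (hf : f = fun x => ∑ y ∈ P, a y * Tr y φ x) :
    ∀ h ∈ G, ∀ z : Fin d → ℤ,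
      fc f (h + Mᵀ.mulVec z) = (∑ y ∈ P, a y * ec h y) * fc φ (h + Mᵀ.mulVec z) := by
  intro h _ z
  rw [hf, fc_finset_sum P (fun y x => a y * Tr y φ x)
    fun y _ => (hper.integrableOn_torusBox_sub hint _).const_mul (a y), Finset.sum_mul]
  refine Finset.sum_congr rfl fun y hy => ?_
  rw [fc_const_mul, hper.fc_Tr, torusChar_two_pi_smul_of_inLattice (hP.1 y hy), mul_assoc]

/-- If `f = Σ_{y ∈ P(M)} a_y T_y φ`, then for all `h ∈ G(Mᵀ)` and `z ∈ ℤ^d`,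
`c_{h+Mᵀz}(f) = â_h · c_{h+Mᵀz}(φ)` with `â_h = Σ_{y ∈ P(M)} a_y e^{-2πi hᵀ y}`. -/
theorem fourierCoeff_of_translate_combination (d : ℕ) (M : Matrix (Fin d) (Fin d) ℤ)
    (hM : M.det ≠ 0) (P : Finset (Fin d → ℝ)) (hP : IsPattern M ↑P)
    (G : Set (Fin d → ℤ)) (hG : IsRepMod Mᵀ G)
    (φ : (Fin d → ℝ) → ℂ) (hper : TorusPeriodic φ)
    (hint : IntegrableOn φ (torusBox d))
    (a : (Fin d → ℝ) → ℂ) (f : (Fin d → ℝ) → ℂ)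
    (hf : f = fun x => ∑ y ∈ P, a y * Tr y φ x) :
    ∀ h ∈ G, ∀ z : Fin d → ℤ,
      fc f (h + Mᵀ.mulVec z) = (∑ y ∈ P, a y * ec h y) * fc φ (h + Mᵀ.mulVec z) :=
  fourierCoeff_of_translate_combination_general d M P hP G φ hper hint a f hf
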